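/- arXiv:2412.02235 — 3 statements merged into one kernel-verified Lean document; each statement's English description precedes it below -/
import Mathlib

section
/- Let μ and τ be distributions on {0,1}^n, let T be a transfer distribution between μ and τ realizing the Earth Mover distance, i.e. E_{(x,y)~T}[d_H(x,y)] = d_EM(μ,τ), and let Ξ be a detailing of T with respect to a finite set A. Let Λ* be the type distribution of the detailing Ξ|_{1,3} of μ, let Υ* be the type distribution of the detailing Ξ|_{2,3} of τ, and let η = Ξ|_3. Then d_EM^η(Λ*, Υ*) ≤ d_EM(μ,τ). -/
open scoped BigOperators

namespace HugeObject

noncomputable section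

/-- A finitely supported probability distribution on `Ω`, given by its mass function. -/
def IsDist {Ω : Type*} (μ : Ω → ℝ) : Prop :=
  (∀ x, 0 ≤ μ x) ∧ (Function.support μ).Finite ∧ ∑ᶠ x, μ x = 1

/-- Total variation distance between two mass functions. -/
def dTV {Ω : Type*} (μ τ : Ω → ℝ) : ℝ :=
  (1 / 2) * ∑ᶠ x, |μ x - τ x|

/-- `T` is a transfer distribution (coupling) between `μ` and `τ`. -/
def IsCoupling {A B : Type*} (T : A × B → ℝ) (μ : A → ℝ) (τ : B → ℝ) : Prop :=
  IsDist T ∧ (∀ a, ∑ᶠ b, T (a, b) = μ a) ∧ (∀ b, ∑ᶠ a, T (a, b) = τ b)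

/-- Earth Mover distance with respect to a distance function `d`: the infimum, over
all transfer distributions between `μ` and `τ`, of the expected distance. -/
def dEM {Ω : Type*} (d : Ω → Ω → ℝ) (μ τ : Ω → ℝ) : ℝ :=
  sInf {c | ∃ T : Ω × Ω → ℝ, IsCoupling T μ τ ∧ c = ∑ᶠ p : Ω × Ω, T p * d p.1 p.2}

/-- η-weighted ℓ1 distance between vectors. -/
def wl1 {A : Type*} (η : A → ℝ) (x y : A → ℝ) : ℝ := ∑ᶠ a, η a * |x a - y a|

/-- A distribution on vectors is supported on `[0,1]^A`. -/
def SuppIn01 {A : Type*} (Λ : (A → ℝ) → ℝ) : Prop :=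
  ∀ t, Λ t ≠ 0 → ∀ a, t a ∈ Set.Icc (0 : ℝ) 1

/-- Empirical distribution of the tuple `t` (distribution of `t I` for uniform `I`). -/
def empDist {n : ℕ} {α : Type*} (t : Fin n → α) : α → ℝ :=
  fun u => (Nat.card {i : Fin n // t i = u} : ℝ) / n

/-- Normalized Hamming distance on `{0,1}^n`. -/
def normHamming (n : ℕ) (x y : Fin n → Bool) : ℝ :=
  (Nat.card {i : Fin n // x i ≠ y i} : ℝ) / n

section Detailing

variable {n : ℕ} {A : Type*} [Fintype A]

/-- Weight distribution (second marginal) of a detailing. -/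
def weight (ξ : (Fin n → Bool) × A → ℝ) (a : A) : ℝ := ∑ x : Fin n → Bool, ξ (x, a)

/-- `ξ` is a detailing of `μ` with respect to `A`: a distribution on
`{0,1}^n × A` whose first marginal is `μ`. -/
def IsDetailing (ξ : (Fin n → Bool) × A → ℝ) (μ : (Fin n → Bool) → ℝ) : Prop :=
  IsDist ξ ∧ ∀ x, ∑ a : A, ξ (x, a) = μ x

/-- Component distribution `μ_a` of a detailing. -/
def component (ξ : (Fin n → Bool) × A → ℝ) (a : A) : (Fin n → Bool) → ℝ :=
  fun x => ξ (x, a) / weight ξ a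

/-- The type of index `i`: `t_i a = Pr_{x ~ μ_a} [x i = 1]` (0 when the weight vanishes). -/
def typeOf (ξ : (Fin n → Bool) × A → ℝ) (i : Fin n) : A → ℝ :=
  fun a => (∑ x : Fin n → Bool, if x i then ξ (x, a) else 0) / weight ξ a

/-- The type distribution of a detailing: distribution of `typeOf ξ I` for uniform `I`. -/
def typeDist (ξ : (Fin n → Bool) × A → ℝ) : (A → ℝ) → ℝ :=
  empDist (fun i : Fin n => typeOf ξ i)

/-- The index of a detailing. -/
def ind (ξ : (Fin n → Bool) × A → ℝ) : ℝ :=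
  (∑ i : Fin n, ∑ a : A, weight ξ a * typeOf ξ i a ^ 2) / n

end Detailing

section Goodness

variable {n q : ℕ}

/-- Marginal of coordinate `j`. -/
def margAt (ν : (Fin n → Bool) → ℝ) (j : Fin n) : Bool → ℝ :=
  fun b => ∑ x : Fin n → Bool, if x j = b then ν x else 0

/-- Joint distribution of the coordinates listed in `J`. -/
def jointAt (ν : (Fin n → Bool) → ℝ) (J : Fin q → Fin n) : (Fin q → Bool) → ℝ :=
  fun y => ∑ x : Fin n → Bool, if ∀ ℓ, x (J ℓ) = y ℓ then ν x else 0

/-- The tuple `J` is ε-independent with respect to `ν`. -/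
def EpsIndep (ε : ℝ) (ν : (Fin n → Bool) → ℝ) (J : Fin q → Fin n) : Prop :=
  dTV (jointAt ν J) (fun y => ∏ ℓ, margAt ν (J ℓ) (y ℓ)) ≤ ε

/-- A distribution on `{0,1}^n` is (ε,q)-good. -/
def IsGoodDist (ε : ℝ) (q : ℕ) (ν : (Fin n → Bool) → ℝ) : Prop :=
  (1 - ε) * (n : ℝ) ^ q ≤ (Nat.card {J : Fin q → Fin n // EpsIndep ε ν J} : ℝ)

/-- A detailing is (ε,q)-good. -/
def IsGoodDetailing {A : Type*} [Fintype A] (ε : ℝ) (q : ℕ)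
    (ξ : (Fin n → Bool) × A → ℝ) : Prop :=
  ∃ J : Finset A, 1 - ε ≤ ∑ a ∈ J, weight ξ a ∧ ∀ a ∈ J, IsGoodDist ε q (component ξ a)

end Goodness

/-- The simulated distribution `D_sim(η, Λ)` on `{0,1}^{s×q}`. -/
def Dsim {A : Type*} [Fintype A] (s q : ℕ) (η : A → ℝ) (Λ : (A → ℝ) → ℝ) :
    (Fin s → Fin q → Bool) → ℝ :=
  fun M => ∑ᶠ T : Fin q → (A → ℝ),
    (∏ j, Λ (T j)) * ∑ a : Fin s → A, (∏ i, η (a i)) *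
      ∏ i : Fin s, ∏ j : Fin q, if M i j then T j (a i) else 1 - T j (a i)

/-- The canonical (s,q) test distribution `D_test` for `μ`. -/
def Dtest (s q n : ℕ) (μ : (Fin n → Bool) → ℝ) : (Fin s → Fin q → Bool) → ℝ :=
  fun M => (∑ J : Fin q → Fin n, ∑ x : Fin s → Fin n → Bool,
    (∏ i, μ (x i)) * (if ∀ i ℓ, x i (J ℓ) = M i ℓ then (1 : ℝ) else 0)) / (n : ℝ) ^ q

/-- Flat refinement of the detailing `ξ` with respect to `η` on `A × B`. -/
def flatRef {n : ℕ} {A B : Type*} [Fintype A] (ξ : (Fin n → Bool) × A → ℝ)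
    (η : A × B → ℝ) : (Fin n → Bool) × (A × B) → ℝ :=
  fun p => η p.2 * component ξ p.2.1 p.1

/-- One-step transition probability of the Change-types construction:
probability of outputting `yi` at a coordinate with source value `xi`,
source type value `h1` and target type value `h2`. -/
def flipStep (h1 h2 : ℝ) (xi yi : Bool) : ℝ :=
  if xi then (if yi then 1 - max 0 ((h1 - h2) / h1) else max 0 ((h1 - h2) / h1))
  else (if yi then max 0 ((h2 - h1) / (1 - h1)) else 1 - max 0 ((h2 - h1) / (1 - h1)))

/-- The output distribution `Ξ` of the Change-types construction. -/
def changeTypes {n : ℕ} {A B : Type*} [Fintype A] (ξ : (Fin n → Bool) × A → ℝ)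
    (η : A × B → ℝ) (H : Fin n → (A × B → ℝ) × (A × B → ℝ)) :
    (Fin n → Bool) × (Fin n → Bool) × (A × B) → ℝ :=
  fun p => η p.2.2 * component ξ p.2.2.1 p.1 *
    ∏ i, flipStep ((H i).1 p.2.2) ((H i).2 p.2.2) (p.1 i) (p.2.1 i)

/-- Pushforward of a mass function along `f`. -/
def push {α β : Type*} (f : α → β) (μ : α → ℝ) : β → ℝ :=
  fun b => ∑ᶠ a ∈ {a | f a = b}, μ a

/-- Rounding to the nearest integer multiple of `ρ`. -/
def roundMul (ρ x : ℝ) : ℝ := ρ * round (x / ρ)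

/-- Adjustment of `η` to `ν`. -/
def adjust {A B : Type*} [Fintype B] (ν : A → ℝ) (η : A × B → ℝ) : A × B → ℝ :=
  fun p => ν p.1 * (η p / ∑ b : B, η (p.1, b))

end
end HugeObject

open HugeObject

section Helpers
open Finset

lemma empDist_eq {n : ℕ} {α : Type*} [DecidableEq α] (f : Fin n → α) (u : α) :
    empDist f u = ((Finset.univ.filter (fun i => f i = u)).card : ℝ) / n := by
  have h : Nat.card {i : Fin n // f i = u} = (Finset.univ.filter (fun i => f i = u)).card := by
    rw [Nat.card_eq_fintype_card, Fintype.card_subtype]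
  unfold empDist
  rw [h]

lemma empDist_nonneg {n : ℕ} {α : Type*} [DecidableEq α] (f : Fin n → α) (u : α) :
    0 ≤ empDist f u := by
  rw [empDist_eq]; positivity

lemma empDist_support {n : ℕ} {α : Type*} [DecidableEq α] (f : Fin n → α) :
    Function.support (empDist f) ⊆ ↑(Finset.univ.image f) := by
  intro u hu
  rw [Function.mem_support, empDist_eq] at hu
  by_contra h
  apply hu
  have he : (Finset.univ.filter (fun i => f i = u)) = ∅ := by
    rw [Finset.filter_eq_empty_iff]
    intro i _ hi
    exact h (Finset.mem_coe.mpr (hi ▸ Finset.mem_image_of_mem f (Finset.mem_univ i)))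
  rw [he]
  simp

lemma finsum_empDist_mul {n : ℕ} {α : Type*} [DecidableEq α] (f : Fin n → α) (g : α → ℝ) :
    ∑ᶠ u, empDist f u * g u = (∑ i, g (f i)) / n := by
  have hsupp : Function.support (fun u => empDist f u * g u) ⊆ ↑(Finset.univ.image f) := by
    intro u hu
    apply empDist_support f
    rw [Function.mem_support] at hu ⊢
    exact fun h0 => hu (by rw [h0, zero_mul])
  rw [finsum_eq_finset_sum_of_support_subset _ hsupp]
  have step : ∀ u ∈ Finset.univ.image f,
      empDist f u * g u = ∑ i ∈ Finset.univ.filter (fun i => f i = u), g (f i) / n := by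
    intro u _
    rw [empDist_eq]
    rw [Finset.sum_congr rfl (fun i hi => by rw [(Finset.mem_filter.mp hi).2])]
    rw [Finset.sum_const, nsmul_eq_mul]
    ring
  rw [Finset.sum_congr rfl step,
    Finset.sum_fiberwise_of_maps_to (fun i _ => Finset.mem_image_of_mem f (Finset.mem_univ i)),
    Finset.sum_div]

lemma finsum_empDist {n : ℕ} (hn : 0 < n) {α : Type*} [DecidableEq α] (f : Fin n → α) :
    ∑ᶠ u, empDist f u = 1 := by
  have h := finsum_empDist_mul f (fun _ => (1 : ℝ))
  simp only [mul_one] at h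
  rw [h, Finset.sum_const, Finset.card_univ, Fintype.card_fin, nsmul_eq_mul, mul_one,
    div_self (by positivity : (n : ℝ) ≠ 0)]

lemma filter_pair_eq {n : ℕ} {α β : Type*} [DecidableEq α] [DecidableEq β]
    (f : Fin n → α) (g : Fin n → β) (u : α) (v : β) :
    Finset.univ.filter (fun i => (f i, g i) = (u, v))
      = (Finset.univ.filter (fun i => f i = u)).filter (fun i => g i = v) := by
  rw [Finset.filter_filter]
  apply Finset.filter_congr
  intro i _
  simp [Prod.ext_iff]

lemma empDist_fst_marginal {n : ℕ} {α β : Type*} [DecidableEq α] [DecidableEq β]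
    (f : Fin n → α) (g : Fin n → β) (u : α) :
    ∑ᶠ v, empDist (fun i => (f i, g i)) (u, v) = empDist f u := by
  have hsupp : Function.support (fun v => empDist (fun i => (f i, g i)) (u, v))
      ⊆ ↑(Finset.univ.image g) := by
    intro v hv
    rw [Function.mem_support, empDist_eq] at hv
    by_contra h
    apply hv
    have he : (Finset.univ.filter (fun i => (f i, g i) = (u, v))) = ∅ := by
      rw [Finset.filter_eq_empty_iff]
      intro i _ hi
      have hgi : g i = v := congrArg Prod.snd hi
      exact h (Finset.mem_coe.mpr (hgi ▸ Finset.mem_image_of_mem g (Finset.mem_univ i)))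
    rw [he]; simp
  rw [finsum_eq_finset_sum_of_support_subset _ hsupp]
  simp only [empDist_eq, filter_pair_eq]
  rw [← Finset.sum_div]
  congr 1
  norm_cast
  exact (Finset.card_eq_sum_card_fiberwise
    (fun i _ => Finset.mem_image_of_mem g (Finset.mem_univ i))).symm

lemma empDist_snd_marginal {n : ℕ} {α β : Type*} [DecidableEq α] [DecidableEq β]
    (f : Fin n → α) (g : Fin n → β) (v : β) :
    ∑ᶠ u, empDist (fun i => (f i, g i)) (u, v) = empDist g v := by
  have hsupp : Function.support (fun u => empDist (fun i => (f i, g i)) (u, v))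
      ⊆ ↑(Finset.univ.image f) := by
    intro u hu
    rw [Function.mem_support, empDist_eq] at hu
    by_contra h
    apply hu
    have he : (Finset.univ.filter (fun i => (f i, g i) = (u, v))) = ∅ := by
      rw [Finset.filter_eq_empty_iff]
      intro i _ hi
      have hfi : f i = u := congrArg Prod.fst hi
      exact h (Finset.mem_coe.mpr (hfi ▸ Finset.mem_image_of_mem f (Finset.mem_univ i)))
    rw [he]; simp
  rw [finsum_eq_finset_sum_of_support_subset _ hsupp]
  have hswap : ∀ u, Finset.univ.filter (fun i => (f i, g i) = (u, v))
      = (Finset.univ.filter (fun i => g i = v)).filter (fun i => f i = u) := by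
    intro u
    rw [Finset.filter_filter]
    apply Finset.filter_congr
    intro i _
    simp [Prod.ext_iff, and_comm]
  simp only [empDist_eq, hswap]
  rw [← Finset.sum_div]
  congr 1
  norm_cast
  exact (Finset.card_eq_sum_card_fiberwise
    (fun i _ => Finset.mem_image_of_mem f (Finset.mem_univ i))).symm

lemma isDist_empDist_pair {n : ℕ} (hn : 0 < n) {α β : Type*} [DecidableEq α] [DecidableEq β]
    (f : Fin n → α) (g : Fin n → β) :
    IsDist (empDist (fun i => (f i, g i))) := by
  refine ⟨fun p => empDist_nonneg _ p, ?_, ?_⟩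
  · exact Set.Finite.subset (Finset.univ.image (fun i => (f i, g i))).finite_toSet
      (empDist_support _)
  · exact finsum_empDist hn _

end Helpers
/-- for a detailing Ξ of an optimal transfer distribution between μ
and τ, the weighted EMD between the type distributions of the two induced
detailings is at most the Earth Mover distance between μ and τ. -/
theorem type_dist_emd_le_emd {A : Type*} [Fintype A] (n : ℕ) (hn : 0 < n)
    (μ τ : (Fin n → Bool) → ℝ) (hμ : IsDist μ) (hτ : IsDist τ)
    (T : (Fin n → Bool) × (Fin n → Bool) → ℝ) (hT : IsCoupling T μ τ)
    (hTopt : ∑ p : (Fin n → Bool) × (Fin n → Bool), T p * normHamming n p.1 p.2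
      = dEM (normHamming n) μ τ)
    (Ξ : (Fin n → Bool) × (Fin n → Bool) × A → ℝ) (hΞ : IsDist Ξ)
    (hdet : ∀ x y, ∑ a : A, Ξ (x, y, a) = T (x, y)) :
    dEM (wl1 (fun a : A => ∑ x : Fin n → Bool, ∑ y : Fin n → Bool, Ξ (x, y, a)))
      (typeDist (fun p : (Fin n → Bool) × A => ∑ y : Fin n → Bool, Ξ (p.1, y, p.2)))
      (typeDist (fun p : (Fin n → Bool) × A => ∑ x : Fin n → Bool, Ξ (x, p.1, p.2)))
      ≤ dEM (normHamming n) μ τ := by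
  classical
  have hΞ0 : ∀ p, 0 ≤ Ξ p := hΞ.1
  set η : A → ℝ := fun a : A => ∑ x : Fin n → Bool, ∑ y : Fin n → Bool, Ξ (x, y, a) with hηdef
  set ξ₁ : (Fin n → Bool) × A → ℝ :=
    fun p : (Fin n → Bool) × A => ∑ y : Fin n → Bool, Ξ (p.1, y, p.2) with hξ₁def
  set ξ₂ : (Fin n → Bool) × A → ℝ :=
    fun p : (Fin n → Bool) × A => ∑ x : Fin n → Bool, Ξ (x, p.1, p.2) with hξ₂def
  have hη0 : ∀ a, 0 ≤ η a := fun a =>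
    Finset.sum_nonneg fun x _ => Finset.sum_nonneg fun y _ => hΞ0 _
  have hw1 : ∀ a, weight ξ₁ a = η a := fun a => rfl
  have hw2 : ∀ a, weight ξ₂ a = η a := fun a => Finset.sum_comm
  set t : Fin n → A → ℝ := fun i => typeOf ξ₁ i with htdef
  set s : Fin n → A → ℝ := fun i => typeOf ξ₂ i with hsdef
  set Θ : ((A → ℝ) × (A → ℝ)) → ℝ := empDist (fun i => (t i, s i)) with hΘdef
  have hcoup : IsCoupling Θ (typeDist ξ₁) (typeDist ξ₂) :=
    ⟨isDist_empDist_pair hn t s, fun u => empDist_fst_marginal t s u,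
      fun v => empDist_snd_marginal t s v⟩
  have hwl1nn : ∀ u v : A → ℝ, 0 ≤ wl1 η u v := fun u v =>
    finsum_nonneg fun a => mul_nonneg (hη0 a) (abs_nonneg _)
  have hbdd : BddBelow {c | ∃ T' : (A → ℝ) × (A → ℝ) → ℝ,
      IsCoupling T' (typeDist ξ₁) (typeDist ξ₂) ∧
      c = ∑ᶠ p : (A → ℝ) × (A → ℝ), T' p * wl1 η p.1 p.2} := by
    refine ⟨0, fun c hc => ?_⟩
    obtain ⟨T', hT', rfl⟩ := hc
    exact finsum_nonneg fun p => mul_nonneg (hT'.1.1 p) (hwl1nn _ _)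
  have hle : dEM (wl1 η) (typeDist ξ₁) (typeDist ξ₂)
      ≤ ∑ᶠ p : (A → ℝ) × (A → ℝ), Θ p * wl1 η p.1 p.2 :=
    csInf_le hbdd ⟨Θ, hcoup, rfl⟩
  refine hle.trans ?_
  rw [← hTopt]
  -- compute the cost of Θ
  have hcost : (∑ᶠ p : (A → ℝ) × (A → ℝ), Θ p * wl1 η p.1 p.2)
      = (∑ i, wl1 η (t i) (s i)) / n :=
    finsum_empDist_mul (fun i => (t i, s i)) (fun u => wl1 η u.1 u.2)
  have hwl1eq : ∀ i, wl1 η (t i) (s i) = ∑ a, η a * |t i a - s i a| := by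
    intro i
    exact finsum_eq_sum_of_fintype _
  -- indicator of disagreement
  set χ : Fin n → (Fin n → Bool) → (Fin n → Bool) → ℝ :=
    fun i x y => if x i ≠ y i then (1 : ℝ) else 0 with hχdef
  have hχnn : ∀ i x y, 0 ≤ χ i x y := by
    intro i x y
    simp only [hχdef]
    split <;> norm_num
  -- key pointwise inequality
  have key : ∀ (i : Fin n) (a : A),
      η a * |t i a - s i a| ≤ ∑ x : Fin n → Bool, ∑ y : Fin n → Bool, Ξ (x, y, a) * χ i x y := by
    intro i a
    by_cases hw : η a = 0
    · have hz : ∀ x y, Ξ (x, y, a) = 0 := by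
        intro x y
        have h1 := (Finset.sum_eq_zero_iff_of_nonneg
          (fun x _ => Finset.sum_nonneg fun y _ => hΞ0 (x, y, a))).mp hw x (Finset.mem_univ x)
        exact (Finset.sum_eq_zero_iff_of_nonneg (fun y _ => hΞ0 (x, y, a))).mp h1 y
          (Finset.mem_univ y)
      rw [hw, zero_mul]
      exact Finset.sum_nonneg fun x _ => Finset.sum_nonneg fun y _ =>
        mul_nonneg (hΞ0 _) (hχnn i x y)
    · have ht : t i a = (∑ x : Fin n → Bool, if x i then ξ₁ (x, a) else 0) / η a := by
        simp only [htdef, typeOf, hw1]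
      have hs : s i a = (∑ y : Fin n → Bool, if y i then ξ₂ (y, a) else 0) / η a := by
        simp only [hsdef, typeOf, hw2]
      set N₁ : ℝ := ∑ x : Fin n → Bool, ∑ y : Fin n → Bool,
        (if x i then (1 : ℝ) else 0) * Ξ (x, y, a) with hN₁def
      set N₂ : ℝ := ∑ x : Fin n → Bool, ∑ y : Fin n → Bool,
        (if y i then (1 : ℝ) else 0) * Ξ (x, y, a) with hN₂def
      have hN1 : (∑ x : Fin n → Bool, if x i then ξ₁ (x, a) else 0) = N₁ := by
        apply Finset.sum_congr rfl
        intro x _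
        split <;> simp [hξ₁def]
      have hN2 : (∑ y : Fin n → Bool, if y i then ξ₂ (y, a) else 0) = N₂ := by
        rw [hN₂def, Finset.sum_comm]
        apply Finset.sum_congr rfl
        intro y _
        split <;> simp [hξ₂def]
      rw [ht, hs, hN1, hN2, div_sub_div_same, abs_div, abs_of_pos
        (lt_of_le_of_ne (hη0 a) (Ne.symm hw)), mul_comm, div_mul_cancel₀ _ hw]
      have hdiff : N₁ - N₂ = ∑ x : Fin n → Bool, ∑ y : Fin n → Bool,
          ((if x i then (1 : ℝ) else 0) - (if y i then 1 else 0)) * Ξ (x, y, a) := by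
        rw [hN₁def, hN₂def, ← Finset.sum_sub_distrib]
        apply Finset.sum_congr rfl
        intro x _
        rw [← Finset.sum_sub_distrib]
        apply Finset.sum_congr rfl
        intro y _
        ring
      rw [hdiff]
      refine (Finset.abs_sum_le_sum_abs _ _).trans ?_
      apply Finset.sum_le_sum
      intro x _
      refine (Finset.abs_sum_le_sum_abs _ _).trans ?_
      apply Finset.sum_le_sum
      intro y _
      have habs : |(if x i then (1 : ℝ) else 0) - (if y i then 1 else 0)| = χ i x y := by
        simp only [hχdef]
        cases hx : x i <;> cases hy : y i <;> simp [hx, hy]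
      rw [abs_mul, abs_of_nonneg (hΞ0 _), habs, mul_comm]
  -- rewrite the target sum
  have hham : ∀ x y : Fin n → Bool, normHamming n x y = (∑ i, χ i x y) / n := by
    intro x y
    unfold normHamming
    have hcard : Nat.card {i : Fin n // x i ≠ y i}
        = (Finset.univ.filter (fun i => x i ≠ y i)).card := by
      rw [Nat.card_eq_fintype_card, Fintype.card_subtype]
    rw [hcard]
    congr 1
    rw [Finset.card_filter]
    push_cast
    simp [hχdef]
  have hrhs : (∑ p : (Fin n → Bool) × (Fin n → Bool), T p * normHamming n p.1 p.2)
      = (∑ x : Fin n → Bool, ∑ y : Fin n → Bool, ∑ a : A, ∑ i : Fin n,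
          Ξ (x, y, a) * χ i x y) / n := by
    rw [Fintype.sum_prod_type, Finset.sum_div]
    apply Finset.sum_congr rfl
    intro x _
    rw [Finset.sum_div]
    apply Finset.sum_congr rfl
    intro y _
    rw [← hdet x y, hham x y, ← mul_div_assoc, Finset.sum_mul_sum]
  rw [hcost, hrhs]
  have hnpos : (0:ℝ) < n := by exact_mod_cast hn
  rw [div_le_div_iff_of_pos_right hnpos]
  calc ∑ i, wl1 η (t i) (s i)
      = ∑ i : Fin n, ∑ a : A, η a * |t i a - s i a| :=
        Finset.sum_congr rfl fun i _ => hwl1eq i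
    _ ≤ ∑ i : Fin n, ∑ a : A, ∑ x : Fin n → Bool, ∑ y : Fin n → Bool, Ξ (x, y, a) * χ i x y :=
        Finset.sum_le_sum fun i _ => Finset.sum_le_sum fun a _ => key i a
    _ = ∑ a : A, ∑ i : Fin n, ∑ x : Fin n → Bool, ∑ y : Fin n → Bool, Ξ (x, y, a) * χ i x y :=
        Finset.sum_comm
    _ = ∑ a : A, ∑ x : Fin n → Bool, ∑ i : Fin n, ∑ y : Fin n → Bool, Ξ (x, y, a) * χ i x y :=
        Finset.sum_congr rfl fun a _ => Finset.sum_comm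
    _ = ∑ a : A, ∑ x : Fin n → Bool, ∑ y : Fin n → Bool, ∑ i : Fin n, Ξ (x, y, a) * χ i x y :=
        Finset.sum_congr rfl fun a _ => Finset.sum_congr rfl fun x _ => Finset.sum_comm
    _ = ∑ x : Fin n → Bool, ∑ a : A, ∑ y : Fin n → Bool, ∑ i : Fin n, Ξ (x, y, a) * χ i x y :=
        Finset.sum_comm
    _ = ∑ x : Fin n → Bool, ∑ y : Fin n → Bool, ∑ a : A, ∑ i : Fin n, Ξ (x, y, a) * χ i x y :=
        Finset.sum_congr rfl fun x _ => Finset.sum_comm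
end

section
/- Let Ξ be the output distribution of the Change-types construction applied to a detailing ξ of μ with respect to A, a distribution η on A×B with η|_1 = ξ|_2, and a map H: {1,…,n} → ([0,1]^{A×B})² with (H(i))_1(a,b) = t_i(a) for all i, a, b. Then for every i ∈ {1,…,n} and every (a,b) ∈ A×B with η(a,b) > 0, Pr_{(x,y)~Ξ|^{3:(a,b)}}[y_i = 1] = (H(i))_2(a,b); consequently, the detailing Ξ|_{2,3} of τ = Ξ|_2 with respect to A×B has, for each index i, type (a,b) ↦ (H(i))_2(a,b). -/
open scoped BigOperators

open HugeObject

lemma flipStep_sum (h1 h2 : ℝ) (xi : Bool) :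
    flipStep h1 h2 xi true + flipStep h1 h2 xi false = 1 := by
  cases xi <;> simp [flipStep]

lemma flipStep_target (h1 h2 : ℝ) (h1m : h1 ∈ Set.Icc (0 : ℝ) 1)
    (h2m : h2 ∈ Set.Icc (0 : ℝ) 1) :
    h1 * flipStep h1 h2 true true + (1 - h1) * flipStep h1 h2 false true = h2 := by
  obtain ⟨h10, h11⟩ := h1m
  obtain ⟨h20, h21⟩ := h2m
  simp only [flipStep, if_true, if_false, Bool.false_eq_true]
  rcases le_or_gt h2 h1 with hle | hlt
  · have hmax0 : max 0 ((h2 - h1) / (1 - h1)) = 0 :=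
      max_eq_left (div_nonpos_of_nonpos_of_nonneg (by linarith) (by linarith))
    rcases eq_or_lt_of_le h10 with h1z | h1pos
    · have h2z : h2 = 0 := le_antisymm (by linarith) h20
      simp [← h1z, h2z]
    · have hmax1 : max 0 ((h1 - h2) / h1) = (h1 - h2) / h1 :=
        max_eq_right (div_nonneg (by linarith) (by linarith))
      rw [hmax0, hmax1]
      field_simp
      ring
  · have h1lt1 : h1 < 1 := lt_of_lt_of_le hlt h21
    have hmax1 : max 0 ((h1 - h2) / h1) = 0 :=
      max_eq_left (div_nonpos_of_nonpos_of_nonneg (by linarith) h10)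
    have hmax0 : max 0 ((h2 - h1) / (1 - h1)) = (h2 - h1) / (1 - h1) :=
      max_eq_right (div_nonneg (by linarith) (by linarith))
    rw [hmax0, hmax1]
    have hne : (1 : ℝ) - h1 ≠ 0 := by linarith
    field_simp
    ring

/-- in the Change-types construction, conditioned on the third
coordinate equaling (a,b) (of positive η-weight), the probability that y_i = 1
equals (H i)_2(a,b); consequently the induced detailing Ξ|_{2,3} of τ = Ξ|_2 has
type (a,b) ↦ (H i)_2(a,b) at each index i. -/
theorem changeTypes_realizes_target_types {A B : Type*} [Fintype A] [Fintype B]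
    (n : ℕ) (hn : 0 < n)
    (μ : (Fin n → Bool) → ℝ) (hμ : IsDist μ)
    (ξ : (Fin n → Bool) × A → ℝ) (hξ : IsDetailing ξ μ)
    (η : A × B → ℝ) (hη : IsDist η)
    (hη1 : ∀ a, ∑ b : B, η (a, b) = weight ξ a)
    (H : Fin n → (A × B → ℝ) × (A × B → ℝ))
    (hH01 : ∀ i ab, (H i).1 ab ∈ Set.Icc (0 : ℝ) 1 ∧ (H i).2 ab ∈ Set.Icc (0 : ℝ) 1)
    (hH1 : ∀ i ab, (H i).1 ab = typeOf ξ i ab.1) :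
    ∀ (i : Fin n) (ab : A × B), 0 < η ab →
      (∑ x : Fin n → Bool, ∑ y : Fin n → Bool,
          if y i then changeTypes ξ η H (x, y, ab) else 0) /
        (∑ x : Fin n → Bool, ∑ y : Fin n → Bool, changeTypes ξ η H (x, y, ab))
        = (H i).2 ab ∧
      typeOf (fun p : (Fin n → Bool) × (A × B) =>
          ∑ x : Fin n → Bool, changeTypes ξ η H (x, p.1, p.2)) i ab = (H i).2 ab := by
  classical
  intro i ab hab
  have ξnn : ∀ p, 0 ≤ ξ p := hξ.1.1
  have ηnn : ∀ p, 0 ≤ η p := hη.1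
  have wpos : 0 < weight ξ ab.1 := by
    rw [← hη1]
    calc (0 : ℝ) < η ab := hab
      _ = η (ab.1, ab.2) := by rw [Prod.mk.eta]
      _ ≤ ∑ b : B, η (ab.1, b) :=
          Finset.single_le_sum (fun b _ => ηnn (ab.1, b)) (Finset.mem_univ ab.2)
  have compnn : ∀ x, 0 ≤ component ξ ab.1 x := fun x => div_nonneg (ξnn _) wpos.le
  have compsum : ∑ x : Fin n → Bool, component ξ ab.1 x = 1 := by
    simp only [component]
    rw [← Finset.sum_div]
    exact div_self wpos.ne'
  have p1 : ∑ x : Fin n → Bool, (if x i then component ξ ab.1 x else 0) = (H i).1 ab := by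
    have hdiv : ∀ x : Fin n → Bool, (if x i then component ξ ab.1 x else 0)
        = (if x i then ξ (x, ab.1) else 0) / weight ξ ab.1 := by
      intro x; by_cases h : x i <;> simp [h, component]
    simp_rw [hdiv, ← Finset.sum_div]
    rw [hH1]
    simp [typeOf]
  set F : (Fin n → Bool) → (Fin n → Bool) → ℝ :=
    fun x y => ∏ j, flipStep ((H j).1 ab) ((H j).2 ab) (x j) (y j) with hF
  have ysum1 : ∀ x, ∑ y : Fin n → Bool, F x y = 1 := by
    intro x
    rw [hF, ← Fintype.piFinset_univ, ← Finset.prod_univ_sum]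
    apply Finset.prod_eq_one
    intro j _
    rw [Fintype.sum_bool, flipStep_sum]
  have ysumi : ∀ x, ∑ y : Fin n → Bool, (if y i then F x y else 0)
      = flipStep ((H i).1 ab) ((H i).2 ab) (x i) true := by
    intro x
    set g : Fin n → Bool → ℝ := fun j b =>
      if j = i then (if b then flipStep ((H j).1 ab) ((H j).2 ab) (x j) b else 0)
      else flipStep ((H j).1 ab) ((H j).2 ab) (x j) b with hg
    have hy : ∀ y, (if y i then F x y else 0) = ∏ j, g j (y j) := by
      intro y
      by_cases h : y i
      · rw [if_pos h, hF]
        apply Finset.prod_congr rfl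
        intro j _
        by_cases hj : j = i
        · subst hj; simp [hg, h]
        · simp [hg, hj]
      · rw [if_neg h]
        exact (Finset.prod_eq_zero (Finset.mem_univ i) (by simp [hg, h])).symm
    simp_rw [hy]
    rw [← Fintype.piFinset_univ, ← Finset.prod_univ_sum]
    rw [Finset.prod_eq_single i (fun j _ hj => by
        simp only [hg, if_neg hj]; rw [Fintype.sum_bool, flipStep_sum])
      (fun h => absurd (Finset.mem_univ i) h)]
    simp [hg, Fintype.sum_bool]
  have hct : ∀ x y, changeTypes ξ η H (x, y, ab) = η ab * component ξ ab.1 x * F x y :=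
    fun x y => rfl
  have denom : ∑ x : Fin n → Bool, ∑ y : Fin n → Bool, changeTypes ξ η H (x, y, ab)
      = η ab := by
    simp_rw [hct, ← Finset.mul_sum, ysum1, mul_one]
    rw [← Finset.mul_sum, compsum, mul_one]
  have numer : ∑ x : Fin n → Bool, ∑ y : Fin n → Bool,
      (if y i then changeTypes ξ η H (x, y, ab) else 0) = η ab * (H i).2 ab := by
    have step1 : ∀ x y, (if y i then changeTypes ξ η H (x, y, ab) else 0)
        = η ab * component ξ ab.1 x * (if y i then F x y else 0) := by
      intro x y; by_cases h : y i <;> simp [h, hct]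
    simp_rw [step1, ← Finset.mul_sum, ysumi]
    have q0 : ∑ x : Fin n → Bool, (if x i then 0 else component ξ ab.1 x)
        = 1 - (H i).1 ab := by
      have hadd : ∑ x : Fin n → Bool, ((if x i then component ξ ab.1 x else 0)
          + (if x i then 0 else component ξ ab.1 x)) = 1 := by
        rw [← compsum]
        apply Finset.sum_congr rfl
        intro x _
        by_cases h : x i <;> simp [h]
      rw [Finset.sum_add_distrib, p1] at hadd
      linarith
    have split : ∑ x : Fin n → Bool,
        component ξ ab.1 x * flipStep ((H i).1 ab) ((H i).2 ab) (x i) true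
        = (∑ x : Fin n → Bool, (if x i then component ξ ab.1 x else 0))
            * flipStep ((H i).1 ab) ((H i).2 ab) true true
          + (∑ x : Fin n → Bool, (if x i then 0 else component ξ ab.1 x))
            * flipStep ((H i).1 ab) ((H i).2 ab) false true := by
      rw [Finset.sum_mul, Finset.sum_mul, ← Finset.sum_add_distrib]
      apply Finset.sum_congr rfl
      intro x _
      by_cases h : x i <;> simp [h]
    calc ∑ x : Fin n → Bool, η ab * component ξ ab.1 x
          * flipStep ((H i).1 ab) ((H i).2 ab) (x i) true
        = η ab * ∑ x : Fin n → Bool, component ξ ab.1 x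
            * flipStep ((H i).1 ab) ((H i).2 ab) (x i) true := by
          rw [Finset.mul_sum]; simp_rw [mul_assoc]
      _ = η ab * (H i).2 ab := by
          rw [split, p1, q0, flipStep_target _ _ (hH01 i ab).1 (hH01 i ab).2]
  constructor
  · rw [numer, denom, mul_comm, mul_div_assoc, div_self hab.ne', mul_one]
  · simp only [typeOf, weight]
    have hnum : ∑ y : Fin n → Bool,
        (if y i then ∑ x : Fin n → Bool, changeTypes ξ η H (x, y, ab) else 0)
        = η ab * (H i).2 ab := by
      rw [← numer, Finset.sum_comm]
      apply Finset.sum_congr rfl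
      intro y _
      by_cases h : y i <;> simp [h]
    have hden : ∑ y : Fin n → Bool, ∑ x : Fin n → Bool, changeTypes ξ η H (x, y, ab)
        = η ab := by rw [← denom, Finset.sum_comm]
    rw [hnum, hden, mul_comm, mul_div_assoc, div_self hab.ne', mul_one]
end

section
/- Let Ξ be the output distribution of the Change-types construction applied to a detailing ξ of μ with respect to A, a distribution η on A×B with η|_1 = ξ|_2, and a map H: {1,…,n} → ([0,1]^{A×B})² with (H(i))_1(a,b) = t_i(a) for all i, a, b. Then d_EM(Ξ|_1, Ξ|_2) ≤ (1/n)·Σ_{i=1}^n E_{(a,b)~η}[ |(H(i))_2(a,b) − (H(i))_1(a,b)| ], where d_EM is the Earth Mover distance with respect to the normalized Hamming distance. -/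
/-!
The construction is itself a transport plan: pairing `x` with `y` through `Ξ` couples the two
marginals, so the Earth Mover distance is at most the expected normalized Hamming distance
between `x` and `y`. Given `(a, b)`, coordinates are resampled independently, and coordinate `i`,
which equals `1` with probability `t = t_i(a)`, is flipped with probability
`t · max(0, (t - h)/t) + (1 - t) · max(0, (h - t)/(1 - t)) = |h - t|`, where `h = (H i)₂(a, b)`.
Linearity of expectation over the coordinates gives the bound.
-/

open scoped BigOperators

open HugeObject

namespace HugeObject

open Finset

theorem dEM_le_of_isCoupling {Ω : Type*} {d : Ω → Ω → ℝ} (hd : ∀ x y, 0 ≤ d x y)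
    {μ τ : Ω → ℝ} {T : Ω × Ω → ℝ} (hT : IsCoupling T μ τ) :
    dEM d μ τ ≤ ∑ᶠ p : Ω × Ω, T p * d p.1 p.2 := by
  refine csInf_le ⟨0, ?_⟩ ⟨T, hT, rfl⟩
  rintro _ ⟨T', hT', rfl⟩
  exact finsum_nonneg fun p => mul_nonneg (hT'.1.1 p) (hd _ _)

theorem isCoupling_marginals {α β : Type*} [Fintype α] [Fintype β] {T : α × β → ℝ}
    (hT : ∀ p, 0 ≤ T p) (hT1 : ∑ p, T p = 1) :
    IsCoupling T (fun a => ∑ b, T (a, b)) (fun b => ∑ a, T (a, b)) :=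
  ⟨⟨hT, Set.toFinite _, by rwa [finsum_eq_sum_of_fintype]⟩,
    fun _ => finsum_eq_sum_of_fintype _, fun _ => finsum_eq_sum_of_fintype _⟩

theorem normHamming_eq_hammingDist_div (n : ℕ) (x y : Fin n → Bool) :
    normHamming n x y = hammingDist x y / n := by
  rw [normHamming, Nat.card_eq_fintype_card, Fintype.card_subtype]
  rfl

theorem normHamming_nonneg (n : ℕ) (x y : Fin n → Bool) : 0 ≤ normHamming n x y := by
  unfold normHamming
  positivity

section ProductKernel

variable {ι : Type*} [Fintype ι] [DecidableEq ι] {K : ι → Bool → Bool → ℝ}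

theorem sum_prod_kernel_eq_one (hK : ∀ i b, K i b true + K i b false = 1) (x : ι → Bool) :
    ∑ y : ι → Bool, ∏ i, K i (x i) (y i) = 1 := by
  rw [← Fintype.prod_sum]
  simp [hK]

theorem sum_prod_kernel_mul_ne (hK : ∀ i b, K i b true + K i b false = 1) (x : ι → Bool)
    (i : ι) :
    ∑ y : ι → Bool, (∏ j, K j (x j) (y j)) * (if x i ≠ y i then 1 else 0) = K i (x i) (!x i) := by
  have factor : ∀ y : ι → Bool, (∏ j, K j (x j) (y j)) * (if x i ≠ y i then 1 else 0) =
      ∏ j, K j (x j) (y j) * (if j = i then (if x j ≠ y j then 1 else 0) else 1) := by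
    intro y
    rw [prod_mul_distrib, prod_ite_eq' univ i fun j => if x j ≠ y j then (1 : ℝ) else 0,
      if_pos (mem_univ i)]
  simp_rw [factor]
  rw [← Fintype.prod_sum fun j b => K j (x j) b * if j = i then (if x j ≠ b then 1 else 0) else 1]
  simp_rw [Fintype.sum_bool]
  rw [Fintype.prod_eq_single i fun j hj => by simp [hj, hK]]
  cases x i <;> simp

theorem sum_prod_kernel_mul_hammingDist (hK : ∀ i b, K i b true + K i b false = 1)
    (x : ι → Bool) :
    ∑ y : ι → Bool, (∏ j, K j (x j) (y j)) * hammingDist x y = ∑ i, K i (x i) (!x i) := by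
  simp_rw [hammingDist, card_filter, Nat.cast_sum, Nat.cast_ite, Nat.cast_one, Nat.cast_zero,
    mul_sum]
  rw [sum_comm]
  exact sum_congr rfl fun i _ => sum_prod_kernel_mul_ne hK x i

end ProductKernel

theorem flipStep_true_add_false (h₁ h₂ : ℝ) (b : Bool) :
    flipStep h₁ h₂ b true + flipStep h₁ h₂ b false = 1 := by
  cases b <;> simp [flipStep]

theorem flipStep_nonneg {h₁ h₂ : ℝ} (hh₁ : h₁ ∈ Set.Icc (0 : ℝ) 1) (hh₂ : h₂ ∈ Set.Icc (0 : ℝ) 1)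
    (b c : Bool) : 0 ≤ flipStep h₁ h₂ b c := by
  obtain ⟨h₁0, h₁1⟩ := hh₁
  obtain ⟨h₂0, h₂1⟩ := hh₂
  have down_le_one : (h₁ - h₂) / h₁ ≤ 1 := div_le_one_of_le₀ (by linarith) h₁0
  have up_le_one : (h₂ - h₁) / (1 - h₁) ≤ 1 := div_le_one_of_le₀ (by linarith) (by linarith)
  cases b <;> cases c <;> simp [flipStep, down_le_one, up_le_one]

theorem mul_max_zero_div {a c : ℝ} (ha : 0 ≤ a) (hc : a = 0 → c ≤ 0) :
    a * max 0 (c / a) = max 0 c := by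
  rcases ha.eq_or_lt with rfl | ha
  · simp [hc rfl]
  · rw [mul_max_of_nonneg _ _ ha.le, mul_zero, mul_div_cancel₀ _ ha.ne']

theorem flipStep_flip_expectation {h₁ h₂ : ℝ} (hh₁ : h₁ ∈ Set.Icc (0 : ℝ) 1)
    (hh₂ : h₂ ∈ Set.Icc (0 : ℝ) 1) :
    h₁ * flipStep h₁ h₂ true false + (1 - h₁) * flipStep h₁ h₂ false true = |h₂ - h₁| := by
  obtain ⟨h₁0, h₁1⟩ := hh₁
  obtain ⟨h₂0, h₂1⟩ := hh₂
  simp only [flipStep, if_true, Bool.false_eq_true, if_false]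
  rw [mul_max_zero_div h₁0 fun h => by linarith,
    mul_max_zero_div (sub_nonneg.2 h₁1) fun h => by linarith]
  rcases le_total h₁ h₂ with h | h
  · rw [max_eq_left (by linarith), max_eq_right (by linarith), abs_of_nonneg (by linarith)]
    ring
  · rw [max_eq_right (by linarith), max_eq_left (by linarith), abs_of_nonpos (by linarith)]
    ring

section ChangeTypes

variable {n : ℕ} {A B : Type*} {ξ : (Fin n → Bool) × A → ℝ} {η : A × B → ℝ}
  {H : Fin n → (A × B → ℝ) × (A × B → ℝ)}

theorem sum_component_eq_one {a : A} (hw : weight ξ a ≠ 0) : ∑ x, component ξ a x = 1 := by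
  simp only [component, ← sum_div]
  exact div_self hw

theorem sum_component_mul_apply {a : A} (hw : weight ξ a ≠ 0) (i : Fin n) (g : Bool → ℝ) :
    ∑ x, component ξ a x * g (x i) = typeOf ξ i a * g true + (1 - typeOf ξ i a) * g false := by
  have split : ∀ x : Fin n → Bool, component ξ a x * g (x i) =
      (if x i then ξ (x, a) else 0) / weight ξ a * (g true - g false) +
        component ξ a x * g false := by
    intro x
    cases x i <;> simp [component]; ring
  rw [sum_congr rfl fun x _ => split x, sum_add_distrib, ← sum_mul, ← sum_mul, ← sum_div,
    sum_component_eq_one hw, typeOf]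
  ring

theorem eq_zero_of_weight_eq_zero [Fintype B] (hη : ∀ ab, 0 ≤ η ab)
    (hη₁ : ∀ a, ∑ b : B, η (a, b) = weight ξ a) {ab : A × B} (hw : weight ξ ab.1 = 0) :
    η ab = 0 :=
  (sum_eq_zero_iff_of_nonneg fun b _ => hη (ab.1, b)).1 ((hη₁ ab.1).trans hw) ab.2 (mem_univ _)

theorem sum_flatRef_fst [Fintype A] {ab : A × B} (hη₀ : weight ξ ab.1 = 0 → η ab = 0) :
    ∑ x, flatRef ξ η (x, ab) = η ab := by
  by_cases hw : weight ξ ab.1 = 0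
  · simp [flatRef, hη₀ hw]
  · simp only [flatRef, ← mul_sum, sum_component_eq_one hw, mul_one]

theorem sum_flatRef_mul_apply [Fintype A] {ab : A × B} (hη₀ : weight ξ ab.1 = 0 → η ab = 0)
    (i : Fin n) (g : Bool → ℝ) :
    ∑ x, flatRef ξ η (x, ab) * g (x i) =
      η ab * (typeOf ξ i ab.1 * g true + (1 - typeOf ξ i ab.1) * g false) := by
  by_cases hw : weight ξ ab.1 = 0
  · simp [flatRef, hη₀ hw]
  · simp only [flatRef, mul_assoc, ← mul_sum, sum_component_mul_apply hw]

theorem changeTypes_nonneg [Fintype A] (hξ : ∀ p, 0 ≤ ξ p) (hη : ∀ ab, 0 ≤ η ab)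
    (hH : ∀ i ab, (H i).1 ab ∈ Set.Icc (0 : ℝ) 1 ∧ (H i).2 ab ∈ Set.Icc (0 : ℝ) 1)
    (p : (Fin n → Bool) × (Fin n → Bool) × (A × B)) : 0 ≤ changeTypes ξ η H p := by
  have hw : 0 ≤ weight ξ p.2.2.1 := sum_nonneg fun x _ => hξ _
  exact mul_nonneg (mul_nonneg (hη _) (div_nonneg (hξ _) hw))
    (prod_nonneg fun i _ => flipStep_nonneg (hH i _).1 (hH i _).2 _ _)

theorem sum_changeTypes_snd [Fintype A] (x : Fin n → Bool) (ab : A × B) :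
    ∑ y, changeTypes ξ η H (x, y, ab) = flatRef ξ η (x, ab) := by
  simp only [changeTypes, ← mul_sum]
  rw [sum_prod_kernel_eq_one (fun i => flipStep_true_add_false _ _), mul_one, flatRef]

theorem sum_changeTypes_mul_hammingDist [Fintype A] {ab : A × B}
    (hη₀ : weight ξ ab.1 = 0 → η ab = 0)
    (hH : ∀ i, (H i).1 ab ∈ Set.Icc (0 : ℝ) 1 ∧ (H i).2 ab ∈ Set.Icc (0 : ℝ) 1)
    (hH₁ : ∀ i, (H i).1 ab = typeOf ξ i ab.1) :
    ∑ x, ∑ y, changeTypes ξ η H (x, y, ab) * hammingDist x y =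
      ∑ i, η ab * |(H i).2 ab - (H i).1 ab| := by
  have per_source : ∀ x : Fin n → Bool, ∑ y, changeTypes ξ η H (x, y, ab) * hammingDist x y =
      ∑ i, flatRef ξ η (x, ab) * flipStep ((H i).1 ab) ((H i).2 ab) (x i) (!x i) := by
    intro x
    simp only [changeTypes, mul_assoc, ← mul_sum]
    rw [sum_prod_kernel_mul_hammingDist (fun i => flipStep_true_add_false _ _), flatRef,
      mul_assoc]
  simp_rw [per_source]
  rw [sum_comm]
  refine sum_congr rfl fun i _ => ?_
  rw [sum_flatRef_mul_apply hη₀ i fun b => flipStep ((H i).1 ab) ((H i).2 ab) b (!b), ← hH₁ i]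
  simp only [Bool.not_true, Bool.not_false]
  rw [flipStep_flip_expectation (hH i).1 (hH i).2]

theorem sum_changeTypes [Fintype A] [Fintype B] (hη₀ : ∀ ab, weight ξ ab.1 = 0 → η ab = 0)
    (hη : ∑ ab, η ab = 1) :
    ∑ p : (Fin n → Bool) × (Fin n → Bool), ∑ ab, changeTypes ξ η H (p.1, p.2, ab) = 1 := by
  rw [Fintype.sum_prod_type]
  dsimp only
  rw [sum_congr rfl fun x _ => sum_comm]
  simp_rw [sum_changeTypes_snd]
  rw [sum_comm]
  simp_rw [sum_flatRef_fst (hη₀ _)]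
  exact hη

theorem changeTypes_transport_cost [Fintype A] [Fintype B]
    (hη₀ : ∀ ab, weight ξ ab.1 = 0 → η ab = 0)
    (hH : ∀ i ab, (H i).1 ab ∈ Set.Icc (0 : ℝ) 1 ∧ (H i).2 ab ∈ Set.Icc (0 : ℝ) 1)
    (hH₁ : ∀ i ab, (H i).1 ab = typeOf ξ i ab.1) :
    ∑ᶠ p : (Fin n → Bool) × (Fin n → Bool),
        (∑ ab, changeTypes ξ η H (p.1, p.2, ab)) * normHamming n p.1 p.2 =
      (∑ i, ∑ ab, η ab * |(H i).2 ab - (H i).1 ab|) / n := by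
  rw [finsum_eq_sum_of_fintype, Fintype.sum_prod_type]
  dsimp only
  simp_rw [normHamming_eq_hammingDist_div, mul_div_assoc', ← sum_div, sum_mul]
  congr 1
  rw [sum_comm (s := univ (α := Fin n))]
  simp_rw [← sum_changeTypes_mul_hammingDist (hη₀ _) (fun i => hH i _) (fun i => hH₁ i _)]
  exact (sum_congr rfl fun x _ => sum_comm).trans sum_comm

end ChangeTypes

end HugeObject

theorem changeTypes_emd_bound_general {A B : Type*} [Fintype A] [Fintype B]
    (n : ℕ)
    (μ : (Fin n → Bool) → ℝ)
    (ξ : (Fin n → Bool) × A → ℝ) (hξ : IsDetailing ξ μ)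
    (η : A × B → ℝ) (hη : IsDist η)
    (hη1 : ∀ a, ∑ b : B, η (a, b) = weight ξ a)
    (H : Fin n → (A × B → ℝ) × (A × B → ℝ))
    (hH01 : ∀ i ab, (H i).1 ab ∈ Set.Icc (0 : ℝ) 1 ∧ (H i).2 ab ∈ Set.Icc (0 : ℝ) 1)
    (hH1 : ∀ i ab, (H i).1 ab = typeOf ξ i ab.1) :
    dEM (normHamming n)
      (fun x => ∑ y : Fin n → Bool, ∑ ab : A × B, changeTypes ξ η H (x, y, ab))
      (fun y => ∑ x : Fin n → Bool, ∑ ab : A × B, changeTypes ξ η H (x, y, ab))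
      ≤ (∑ i : Fin n, ∑ ab : A × B, η ab * |(H i).2 ab - (H i).1 ab|) / n := by
  obtain ⟨hη_nonneg, -, hη_one⟩ := hη
  rw [finsum_eq_sum_of_fintype] at hη_one
  -- `component ξ a` is `0` (division by zero) when `weight ξ a = 0`; `Ξ` has mass one only
  -- because `η` vanishes there.
  have hη₀ : ∀ ab : A × B, weight ξ ab.1 = 0 → η ab = 0 :=
    fun _ => eq_zero_of_weight_eq_zero hη_nonneg hη1
  have hΞ_nonneg := changeTypes_nonneg hξ.1.1 hη_nonneg hH01
  have hcoupling := isCoupling_marginals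
    (fun p => Finset.sum_nonneg fun ab _ => hΞ_nonneg (p.1, p.2, ab)) (sum_changeTypes hη₀ hη_one)
  exact (dEM_le_of_isCoupling (normHamming_nonneg n) hcoupling).trans_eq
    (changeTypes_transport_cost hη₀ hH01 hH1)

/-- the two marginal distributions of the Change-types construction
are close in Earth Mover distance (over the normalized Hamming distance), up to
the average discrepancy between the source and target types. -/
theorem changeTypes_emd_bound {A B : Type*} [Fintype A] [Fintype B]
    (n : ℕ) (hn : 0 < n)
    (μ : (Fin n → Bool) → ℝ) (hμ : IsDist μ)
    (ξ : (Fin n → Bool) × A → ℝ) (hξ : IsDetailing ξ μ)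
    (η : A × B → ℝ) (hη : IsDist η)
    (hη1 : ∀ a, ∑ b : B, η (a, b) = weight ξ a)
    (H : Fin n → (A × B → ℝ) × (A × B → ℝ))
    (hH01 : ∀ i ab, (H i).1 ab ∈ Set.Icc (0 : ℝ) 1 ∧ (H i).2 ab ∈ Set.Icc (0 : ℝ) 1)
    (hH1 : ∀ i ab, (H i).1 ab = typeOf ξ i ab.1) :
    dEM (normHamming n)
      (fun x => ∑ y : Fin n → Bool, ∑ ab : A × B, changeTypes ξ η H (x, y, ab))
      (fun y => ∑ x : Fin n → Bool, ∑ ab : A × B, changeTypes ξ η H (x, y, ab))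
      ≤ (∑ i : Fin n, ∑ ab : A × B, η ab * |(H i).2 ab - (H i).1 ab|) / n :=
  changeTypes_emd_bound_general n μ ξ hξ η hη hη1 H hH01 hH1
end
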